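/- arXiv:1808.03511 — 2 statements merged into one kernel-verified Lean document; each statement's English description precedes it below -/
import Mathlib

section
/- Let 𝒞 be a left triangulated category with endofunctor Ω and let 𝒳 be a d𝕫-cluster tilting subcategory of 𝒞. Then the subcategory dℤ𝒳 of the stabilization ℤ𝒞, consisting of all objects isomorphic to (X, dk) with X ∈ 𝒳 and k ∈ ℤ, is closed under direct summands in ℤ𝒞. -/
open CategoryTheory CategoryTheory.Limits ZeroObject

universe w w' v u

namespace Paper

variable (C : Type u) [Category.{v} C] [Preadditive C] [HasZeroObject C] [HasBinaryBiproducts C]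

/-- A Quillen exact structure on an additive category: a class of distinguished
kernel-cokernel pairs (`ses f g` meaning `0 → X → Y → Z → 0` is a conflation)
satisfying the axioms of exact categories. -/
structure ExactStructure where
  ses : ∀ ⦃X Y Z : C⦄, (X ⟶ Y) → (Y ⟶ Z) → Prop
  comp_zero : ∀ ⦃X Y Z : C⦄ {f : X ⟶ Y} {g : Y ⟶ Z}, ses f g → f ≫ g = 0
  isKernel : ∀ ⦃X Y Z : C⦄ {f : X ⟶ Y} {g : Y ⟶ Z} (h : ses f g),
      Nonempty (IsLimit (KernelFork.ofι f (comp_zero h)))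
  isCokernel : ∀ ⦃X Y Z : C⦄ {f : X ⟶ Y} {g : Y ⟶ Z} (h : ses f g),
      Nonempty (IsColimit (CokernelCofork.ofπ g (comp_zero h)))
  ses_id_zero : ∀ X : C, ses (𝟙 X) (0 : X ⟶ 0)
  ses_zero_id : ∀ X : C, ses (0 : (0 : C) ⟶ X) (𝟙 X)
  ses_split : ∀ X Y : C, ses (biprod.inl : X ⟶ X ⊞ Y) (biprod.snd : X ⊞ Y ⟶ Y)
  infl_comp : ∀ ⦃X Y Z : C⦄ {f : X ⟶ Y} {g : Y ⟶ Z},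
      (∃ (U : C) (u : Y ⟶ U), ses f u) → (∃ (V : C) (v : Z ⟶ V), ses g v) →
      ∃ (W : C) (w : Z ⟶ W), ses (f ≫ g) w
  defl_comp : ∀ ⦃X Y Z : C⦄ {f : X ⟶ Y} {g : Y ⟶ Z},
      (∃ (U : C) (u : U ⟶ X), ses u f) → (∃ (V : C) (v : V ⟶ Y), ses v g) →
      ∃ (W : C) (w : W ⟶ X), ses w (f ≫ g)
  pushout_infl : ∀ ⦃X Y Z : C⦄ (f : X ⟶ Y) (g : X ⟶ Z),
      (∃ (U : C) (u : Y ⟶ U), ses f u) →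
      ∃ (W : C) (h : Y ⟶ W) (k : Z ⟶ W), (∃ (V : C) (v : W ⟶ V), ses k v) ∧ IsPushout f g h k
  pullback_defl : ∀ ⦃X Y Z : C⦄ (f : Y ⟶ X) (g : Z ⟶ X),
      (∃ (U : C) (u : U ⟶ Y), ses u f) →
      ∃ (W : C) (h : W ⟶ Y) (k : W ⟶ Z), (∃ (V : C) (v : V ⟶ W), ses v h) ∧ IsPullback h k f g

variable {C}

/-- Admissible monomorphisms. -/
def ExactStructure.Inflation (E : ExactStructure C) {X Y : C} (f : X ⟶ Y) : Prop :=
  ∃ (Z : C) (g : Y ⟶ Z), E.ses f g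

/-- Admissible epimorphisms. -/
def ExactStructure.Deflation (E : ExactStructure C) {Y Z : C} (g : Y ⟶ Z) : Prop :=
  ∃ (X : C) (f : X ⟶ Y), E.ses f g

/-- Projective objects with respect to an exact structure. -/
def ExactStructure.Proj (E : ExactStructure C) (P : C) : Prop :=
  ∀ ⦃Y Z : C⦄ (g : Y ⟶ Z), E.Deflation g → ∀ h : P ⟶ Z, ∃ k : P ⟶ Y, k ≫ g = h

/-- The exact category has enough projectives. -/
def EnoughProj (E : ExactStructure C) : Prop :=
  ∀ X : C, ∃ (P : C) (p : P ⟶ X), E.Proj P ∧ E.Deflation p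

/-- The stable relation: two morphisms are identified iff their difference factors
through a projective object. -/
def stableRel (E : ExactStructure C) : HomRel C := fun {X Y} f g =>
  ∃ (P : C) (a : X ⟶ P) (b : P ⟶ Y), E.Proj P ∧ a ≫ b = f - g

/-- The stable category `ℰ/𝒫`. -/
abbrev St (E : ExactStructure C) := CategoryTheory.Quotient (stableRel E)

/-- The projection functor `ℰ → ℰ/𝒫`. -/
def stq (E : ExactStructure C) : C ⥤ St E := Quotient.functor _

end Paper

namespace Paper

variable {C : Type u} [Category.{v} C] [Preadditive C] [HasZeroObject C] [HasBinaryBiproducts C]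

/-- An `n`-fold Yoneda extension `0 → B → X_n → ⋯ → X_1 → A → 0`, encoded
recursively by splicing off the leftmost conflation. -/
inductive NExt (E : ExactStructure C) : ℕ → C → C → Type (max u v)
  | one {A B Y : C} (f : B ⟶ Y) (g : Y ⟶ A) (h : E.ses f g) : NExt E 1 A B
  | step {A B K Y : C} {n : ℕ} (f : B ⟶ Y) (g : Y ⟶ K) (h : E.ses f g)
      (ξ : NExt E n A K) : NExt E (n + 1) A B

/-- Morphisms of Yoneda extensions over given maps on the two end objects. -/
inductive NExtMor (E : ExactStructure C) :
    ∀ {n : ℕ} {A A' B B' : C}, (B ⟶ B') → (A ⟶ A') → NExt E n A B → NExt E n A' B' → Prop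
  | one {A A' B B' Y Y' : C} {β : B ⟶ B'} {α : A ⟶ A'}
      {f : B ⟶ Y} {g : Y ⟶ A} {h : E.ses f g}
      {f' : B' ⟶ Y'} {g' : Y' ⟶ A'} {h' : E.ses f' g'}
      (y : Y ⟶ Y') (hy₁ : f ≫ y = β ≫ f') (hy₂ : y ≫ g' = g ≫ α) :
      NExtMor E β α (NExt.one f g h) (NExt.one f' g' h')
  | step {n : ℕ} {A A' B B' K K' Y Y' : C} {β : B ⟶ B'} {α : A ⟶ A'}
      {f : B ⟶ Y} {g : Y ⟶ K} {h : E.ses f g} {ξ : NExt E n A K}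
      {f' : B' ⟶ Y'} {g' : Y' ⟶ K'} {h' : E.ses f' g'} {ξ' : NExt E n A' K'}
      (y : Y ⟶ Y') (k : K ⟶ K') (hy₁ : f ≫ y = β ≫ f') (hy₂ : y ≫ g' = g ≫ k)
      (tail : NExtMor E k α ξ ξ') :
      NExtMor E β α (NExt.step f g h ξ) (NExt.step f' g' h' ξ')

/-- Yoneda equivalence of `n`-extensions: the equivalence relation generated by
morphisms of extensions which are the identity on both end objects. -/
def ExtEquiv (E : ExactStructure C) {n : ℕ} {A B : C} (ξ ξ' : NExt E n A B) : Prop :=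
  Relation.EqvGen (fun a b => NExtMor E (𝟙 B) (𝟙 A) a b) ξ ξ'

/-- The trivial `(n+1)`-extension of `A` by the zero object. -/
noncomputable def trivN (E : ExactStructure C) : (n : ℕ) → (A : C) → NExt E (n + 1) A (0 : C)
  | 0, A => NExt.one (0 : (0 : C) ⟶ A) (𝟙 A) (E.ses_zero_id A)
  | n + 1, A => NExt.step (𝟙 (0 : C)) (0 : (0 : C) ⟶ (0 : C)) (E.ses_id_zero (0 : C)) (trivN E n A)

/-- The trivial (split) `(n+1)`-extension of `A` by `B`. -/
noncomputable def trivExt (E : ExactStructure C) : (n : ℕ) → (A B : C) → NExt E (n + 1) A B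
  | 0, A, B => NExt.one (biprod.inl : B ⟶ B ⊞ A) (biprod.snd : B ⊞ A ⟶ A) (E.ses_split B A)
  | n + 1, A, B => NExt.step (𝟙 B) (0 : B ⟶ (0 : C)) (E.ses_id_zero B) (trivN E n A)

/-- `extVanish E n A B` means `Ext^n_ℰ(A, B) = 0`: every `n`-fold Yoneda extension
of `A` by `B` is Yoneda-equivalent to the trivial one. -/
def extVanish (E : ExactStructure C) : ℕ → C → C → Prop
  | 0, _, _ => True
  | n + 1, A, B => ∀ ξ : NExt E (n + 1) A B, ExtEquiv E ξ (trivExt E n A B)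

/-- `MRes E M n X` : there is an exact sequence `0 → M_n → ⋯ → M_1 → X → 0`
with all `M_j ∈ M`. -/
inductive MRes (E : ExactStructure C) (M : Set C) : ℕ → C → Prop
  | iso {X M₀ : C} (hM : M₀ ∈ M) (f : M₀ ⟶ X) (hf : IsIso f) : MRes E M 1 X
  | step {X K M₀ : C} {n : ℕ} (hM : M₀ ∈ M) (i : K ⟶ M₀) (p : M₀ ⟶ X)
      (hses : E.ses i p) (hK : MRes E M n K) : MRes E M (n + 1) X

/-- `CoRes E M n X` : there is an exact sequence `0 → X → M^1 → ⋯ → M^n → 0`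
with all `M^j ∈ M`. -/
inductive CoRes (E : ExactStructure C) (M : Set C) : ℕ → C → Prop
  | iso {X M₀ : C} (hM : M₀ ∈ M) (f : X ⟶ M₀) (hf : IsIso f) : CoRes E M 1 X
  | step {X K M₀ : C} {n : ℕ} (hM : M₀ ∈ M) (i : X ⟶ M₀) (p : M₀ ⟶ K)
      (hses : E.ses i p) (hK : CoRes E M n K) : CoRes E M (n + 1) X

/-- Right `M`-approximations. -/
def RightApprox {D : Type w} [Category.{w'} D] (M : Set D) {M₀ X : D} (f : M₀ ⟶ X) : Prop :=
  ∀ M' ∈ M, ∀ g : M' ⟶ X, ∃ h : M' ⟶ M₀, h ≫ f = g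

/-- Left `M`-approximations. -/
def LeftApprox {D : Type w} [Category.{w'} D] (M : Set D) {X M₀ : D} (f : X ⟶ M₀) : Prop :=
  ∀ M' ∈ M, ∀ g : X ⟶ M', ∃ h : M₀ ⟶ M', f ≫ h = g

/-- `d`-cluster tilting subcategory of an exact category (Definition 4.1). -/
structure ClusterTiltingExact (E : ExactStructure C) (M : Set C) (d : ℕ) : Prop where
  contra : ∀ X : C, ∃ (M₀ : C) (f : M₀ ⟶ X), M₀ ∈ M ∧ RightApprox M f
  cova : ∀ X : C, ∃ (M₀ : C) (f : X ⟶ M₀), M₀ ∈ M ∧ LeftApprox M f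
  gen : ∀ X : C, ∃ (M₀ : C) (f : M₀ ⟶ X), M₀ ∈ M ∧ E.Deflation f
  cogen : ∀ X : C, ∃ (M₀ : C) (f : X ⟶ M₀), M₀ ∈ M ∧ E.Inflation f
  eq_left : M = {X : C | ∀ M' ∈ M, ∀ i : ℕ, 1 ≤ i → i + 1 ≤ d → extVanish E i X M'}
  eq_right : M = {X : C | ∀ M' ∈ M, ∀ i : ℕ, 1 ≤ i → i + 1 ≤ d → extVanish E i M' X}

/-- `dℤ`-cluster tilting subcategory of an exact category: `d`-cluster tilting and
`Ext^i(ℳ,ℳ) = 0` for `i ∉ dℤ`. -/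
def ClusterTiltingExactDZ (E : ExactStructure C) (M : Set C) (d : ℕ) : Prop :=
  ClusterTiltingExact E M d ∧
    ∀ M₀ ∈ M, ∀ M₁ ∈ M, ∀ i : ℕ, 0 < i → ¬ (d ∣ i) → extVanish E i M₀ M₁

end Paper

namespace Paper

variable {C : Type u} [Category.{v} C] [Preadditive C] [HasZeroObject C] [HasBinaryBiproducts C]

/-- Iterated composition power of an endofunctor. -/
def fpow {D : Type w} [Category.{w'} D] (F : D ⥤ D) : ℕ → D ⥤ D
  | 0 => 𝟭 D
  | n + 1 => fpow F n ⋙ F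

/-- An `Ω`-sequence `Ω obj₃ → obj₁ → obj₂ → obj₃`. -/
structure LTTriangle (D : Type w) [Category.{w'} D] (Om : D ⥤ D) where
  obj₁ : D
  obj₂ : D
  obj₃ : D
  m₀ : Om.obj obj₃ ⟶ obj₁
  m₁ : obj₁ ⟶ obj₂
  m₂ : obj₂ ⟶ obj₃

/-- Isomorphism of `Ω`-sequences. -/
def LTTriangle.IsoSeq {D : Type w} [Category.{w'} D] {Om : D ⥤ D}
    (T T' : LTTriangle D Om) : Prop :=
  ∃ (e₁ : T.obj₁ ≅ T'.obj₁) (e₂ : T.obj₂ ≅ T'.obj₂) (e₃ : T.obj₃ ≅ T'.obj₃),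
    T.m₀ ≫ e₁.hom = Om.map e₃.hom ≫ T'.m₀ ∧
    T.m₁ ≫ e₂.hom = e₁.hom ≫ T'.m₁ ∧
    T.m₂ ≫ e₃.hom = e₂.hom ≫ T'.m₂

/-- A left triangulated structure on an additive category with endofunctor `Ω`
(Definition 3.1: axioms (T0)–(T5)). -/
structure LeftTriangStruct (D : Type w) [Category.{w'} D] [Preadditive D] [HasZeroObject D]
    (Om : D ⥤ D) where
  dist : Set (LTTriangle D Om)
  omAdd : Om.Additive
  iso_closed : ∀ T T' : LTTriangle D Om, T ∈ dist → T.IsoSeq T' → T' ∈ dist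
  contractible : ∀ X : D, LTTriangle.mk X X 0 0 (𝟙 X) 0 ∈ dist
  complete : ∀ {B Z : D} (w : B ⟶ Z),
      ∃ (A : D) (u : Om.obj Z ⟶ A) (v : A ⟶ B), LTTriangle.mk A B Z u v w ∈ dist
  rotate : ∀ T ∈ dist,
      LTTriangle.mk (Om.obj T.obj₃) T.obj₁ T.obj₂ (-Om.map T.m₂) T.m₀ T.m₁ ∈ dist
  complete_mor : ∀ T T' : LTTriangle D Om, T ∈ dist → T' ∈ dist →
      ∀ (g : T.obj₂ ⟶ T'.obj₂) (h : T.obj₃ ⟶ T'.obj₃), T.m₂ ≫ h = g ≫ T'.m₂ →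
      ∃ f : T.obj₁ ⟶ T'.obj₁, T.m₁ ≫ g = f ≫ T'.m₁ ∧ T.m₀ ≫ f = Om.map h ≫ T'.m₀
  octa : ∀ {A B Cc D₀ E₀ : D} {u : Om.obj Cc ⟶ A} {v : A ⟶ B} {w : B ⟶ Cc}
      {f : Om.obj D₀ ⟶ E₀} {g : E₀ ⟶ Cc} {h : Cc ⟶ D₀},
      LTTriangle.mk A B Cc u v w ∈ dist → LTTriangle.mk E₀ Cc D₀ f g h ∈ dist →
      ∃ (F : D) (α : A ⟶ F) (i : Om.obj D₀ ⟶ F) (j : F ⟶ B) (β : F ⟶ E₀),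
        LTTriangle.mk F B D₀ i j (w ≫ h) ∈ dist ∧
        LTTriangle.mk A F E₀ (Om.map g ≫ u) α β ∈ dist ∧
        u ≫ α = Om.map h ≫ i ∧ α ≫ j = v ∧ j ≫ w = β ≫ g

/-- A chain (tower) of triangles `Ω Z_{j-1} → Z_j → M_j → Z_{j-1}` with all middle
terms `M_j` in `X`, used to encode `(d+2)`-angles. -/
inductive LTChain {D : Type w} [Category.{w'} D] [Preadditive D] [HasZeroObject D]
    {Om : D ⥤ D} (L : LeftTriangStruct D Om) (X : Set D) : ℕ → D → D → Prop
  | zero (A : D) : LTChain L X 0 A A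
  | succ {n : ℕ} {A B B' M : D} (hc : LTChain L X n A B) (hM : M ∈ X)
      (u : Om.obj B ⟶ B') (v : B' ⟶ M) (w : M ⟶ B)
      (ht : LTTriangle.mk B' M B u v w ∈ L.dist) : LTChain L X (n + 1) A B'

/-- `d`-cluster tilting subcategory of a left triangulated category (Definition 5.1). -/
structure ClusterTiltingLT {D : Type w} [Category.{w'} D] [Preadditive D] [HasZeroObject D]
    {Om : D ⥤ D} (L : LeftTriangStruct D Om) (X : Set D) (d : ℕ) : Prop where
  summand_closed : ∀ {A Z : D}, Z ∈ X → ∀ (s : A ⟶ Z) (r : Z ⟶ A), s ≫ r = 𝟙 A → A ∈ X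
  /-- every object admits a `(d+2)`-angle `0 → C → X¹ → ⋯ → X^d → 0` with `Xⁱ ∈ X` -/
  cores : ∀ Cobj : D, ∃ Z₀ : D, IsZero Z₀ ∧ LTChain L X d Z₀ Cobj
  /-- every object admits a `(d+2)`-angle `0 → X_d → ⋯ → X_1 → C → 0` with `X_i ∈ X` -/
  res : ∀ Cobj : D, ∃ (Z₀ Z₁ W : D) (u : Om.obj Z₀ ⟶ Z₁) (v : Z₁ ⟶ Cobj) (w : Cobj ⟶ Z₀),
      IsZero Z₀ ∧ LTTriangle.mk Z₁ Cobj Z₀ u v w ∈ L.dist ∧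
      LTChain L X (d - 1) Z₁ W ∧ W ∈ X
  om_bij : ∀ (Cobj X₀ : D), X₀ ∈ X → ∀ i : ℕ, i + 2 ≤ d →
      Function.Bijective (fun f : (fpow Om i).obj X₀ ⟶ Cobj => Om.map f)
  hom_vanish : ∀ (X₀ X₁ : D), X₀ ∈ X → X₁ ∈ X → ∀ i : ℕ, 1 ≤ i → i + 1 ≤ d →
      ∀ f : (fpow Om i).obj X₁ ⟶ X₀, f = 0

/-- `dℤ`-cluster tilting subcategory of a left triangulated category:
`d`-cluster tilting and `Ω^d(X) ⊆ X`. -/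
def ClusterTiltingLTDZ {D : Type w} [Category.{w'} D] [Preadditive D] [HasZeroObject D]
    {Om : D ⥤ D} (L : LeftTriangStruct D Om) (X : Set D) (d : ℕ) : Prop :=
  ClusterTiltingLT L X d ∧ ∀ A ∈ X, (fpow Om d).obj A ∈ X

/-- A triangle `X → Y → Z → ΣX` for a suspension endofunctor. -/
structure Tri (T : Type w) [Category.{w'} T] (Sf : T ⥤ T) where
  obj₁ : T
  obj₂ : T
  obj₃ : T
  m₁ : obj₁ ⟶ obj₂
  m₂ : obj₂ ⟶ obj₃
  m₃ : obj₃ ⟶ Sf.obj obj₁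

/-- Isomorphism of candidate triangles. -/
def Tri.IsoTri {T : Type w} [Category.{w'} T] {Sf : T ⥤ T} (T₁ T₂ : Tri T Sf) : Prop :=
  ∃ (e₁ : T₁.obj₁ ≅ T₂.obj₁) (e₂ : T₁.obj₂ ≅ T₂.obj₂) (e₃ : T₁.obj₃ ≅ T₂.obj₃),
    T₁.m₁ ≫ e₂.hom = e₁.hom ≫ T₂.m₁ ∧
    T₁.m₂ ≫ e₃.hom = e₂.hom ≫ T₂.m₂ ∧
    T₁.m₃ ≫ Sf.map e₁.hom = e₃.hom ≫ T₂.m₃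

/-- `dist` is a triangulated structure on `T` with suspension the equivalence `Se`
(the classical Verdier axioms TR0–TR4). -/
structure TriangStructOn (T : Type w) [Category.{w'} T] [Preadditive T] [HasZeroObject T]
    (Se : T ≌ T) (dist : Set (Tri T Se.functor)) : Prop where
  iso_closed : ∀ T₁ T₂ : Tri T Se.functor, T₁ ∈ dist → T₁.IsoTri T₂ → T₂ ∈ dist
  id_tri : ∀ X : T, Tri.mk X X 0 (𝟙 X) 0 0 ∈ dist
  complete : ∀ {X Y : T} (f : X ⟶ Y),
      ∃ (Z : T) (g : Y ⟶ Z) (h : Z ⟶ Se.functor.obj X), Tri.mk X Y Z f g h ∈ dist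
  rotate : ∀ T₁ ∈ dist,
      Tri.mk T₁.obj₂ T₁.obj₃ (Se.functor.obj T₁.obj₁) T₁.m₂ T₁.m₃ (-(Se.functor.map T₁.m₁)) ∈ dist
  unrotate : ∀ {X Y Z : T} (f : X ⟶ Y) (g : Y ⟶ Z) (h : Z ⟶ Se.functor.obj X),
      Tri.mk Y Z (Se.functor.obj X) g h (-(Se.functor.map f)) ∈ dist →
      Tri.mk X Y Z f g h ∈ dist
  complete_mor : ∀ T₁ T₂ : Tri T Se.functor, T₁ ∈ dist → T₂ ∈ dist →
      ∀ (a : T₁.obj₁ ⟶ T₂.obj₁) (b : T₁.obj₂ ⟶ T₂.obj₂), T₁.m₁ ≫ b = a ≫ T₂.m₁ →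
      ∃ c : T₁.obj₃ ⟶ T₂.obj₃, T₁.m₂ ≫ c = b ≫ T₂.m₂ ∧ T₁.m₃ ≫ Se.functor.map a = c ≫ T₂.m₃
  octa : ∀ {X Y Z U V W : T} (u : X ⟶ Y) (v : Y ⟶ Z) (a : Y ⟶ U) (a' : U ⟶ Se.functor.obj X)
      (b : Z ⟶ V) (b' : V ⟶ Se.functor.obj Y) (c : Z ⟶ W) (c' : W ⟶ Se.functor.obj X),
      Tri.mk X Y U u a a' ∈ dist → Tri.mk Y Z V v b b' ∈ dist →
      Tri.mk X Z W (u ≫ v) c c' ∈ dist →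
      ∃ (f₁ : U ⟶ W) (f₂ : W ⟶ V),
        Tri.mk U W V f₁ f₂ (b' ≫ Se.functor.map a) ∈ dist ∧
        a ≫ f₁ = v ≫ c ∧ f₁ ≫ c' = a' ∧ c ≫ f₂ = b ∧ f₂ ≫ b' = c' ≫ Se.functor.map u

/-- `d`-cluster tilting subcategory of a category with suspension functor `Sf`
(the triangulated-sense definition, Definition 4.1 with `Ext^i(X,Y) = Hom(X, Σ^i Y)`). -/
structure ClusterTiltingTri (T : Type w) [Category.{w'} T] [Preadditive T]
    (Sf : T ⥤ T) (M : Set T) (d : ℕ) : Prop where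
  contra : ∀ X : T, ∃ (M₀ : T) (f : M₀ ⟶ X), M₀ ∈ M ∧ RightApprox M f
  cova : ∀ X : T, ∃ (M₀ : T) (f : X ⟶ M₀), M₀ ∈ M ∧ LeftApprox M f
  eq_left : M = {Eo : T | ∀ M' ∈ M, ∀ i : ℕ, 1 ≤ i → i + 1 ≤ d →
      ∀ f : Eo ⟶ (fpow Sf i).obj M', f = 0}
  eq_right : M = {Eo : T | ∀ M' ∈ M, ∀ i : ℕ, 1 ≤ i → i + 1 ≤ d →
      ∀ f : M' ⟶ (fpow Sf i).obj Eo, f = 0}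

/-- `dℤ`-cluster tilting subcategory in the triangulated sense:
`d`-cluster tilting and `Σ^d(M) ⊆ M`. -/
def ClusterTiltingTriDZ (T : Type w) [Category.{w'} T] [Preadditive T]
    (Sf : T ⥤ T) (M : Set T) (d : ℕ) : Prop :=
  ClusterTiltingTri T Sf M d ∧ ∀ A ∈ M, (fpow Sf d).obj A ∈ M

/-- Integer powers of an auto-equivalence. -/
def zpow {T : Type w} [Category.{w'} T] (Se : T ≌ T) : ℤ → T ⥤ T
  | Int.ofNat n => fpow Se.functor n
  | Int.negSucc n => fpow Se.inverse (n + 1)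

end Paper

namespace Paper

variable {C : Type u} [Category.{v} C] [Preadditive C] [HasZeroObject C] [HasBinaryBiproducts C]

/-- Raising a morphism `Ω^a X ⟶ Ω^b Y` by applying `F` `j` more times. -/
def raiseN {D : Type w} [Category.{w'} D] (F : D ⥤ D) :
    ∀ (j : ℕ) {X Y : D} {a b : ℕ},
      ((fpow F a).obj X ⟶ (fpow F b).obj Y) → ((fpow F (a + j)).obj X ⟶ (fpow F (b + j)).obj Y)
  | 0, _, _, _, _, f => f
  | j + 1, _, _, _, _, f => F.map (raiseN F j f)

/-- `S` is (a realization of) the stabilization `ℤD` of the category `D` with respect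
to the endofunctor `F`: objects are pairs `(X, n)`, `X ∈ D`, `n ∈ ℤ`, and
`Hom((X,m),(Y,n)) = colim_k Hom(F^{m+k} X, F^{n+k} Y)`.  The data consists of the
objects `obj X n` together with the structure maps `lift` into the colimit, and the
axioms say exactly that the hom groups are the filtered colimits above and that every
object of `S` is isomorphic to some `(X, n)`. -/
structure IsStabilization {D : Type u'} [Category.{v'} D] [Preadditive D] (F : D ⥤ D)
    (S : Type w) [Category.{w'} S] [Preadditive S] where
  obj : D → ℤ → S
  lift : ∀ {X Y : D} (a b : ℕ) (m n : ℤ), (a : ℤ) + n = (b : ℤ) + m →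
      (((fpow F a).obj X) ⟶ ((fpow F b).obj Y)) → (obj X m ⟶ obj Y n)
  lift_raise : ∀ {X Y : D} (a b : ℕ) (m n : ℤ) (h : (a : ℤ) + n = (b : ℤ) + m)
      (h' : ((a + 1 : ℕ) : ℤ) + n = ((b + 1 : ℕ) : ℤ) + m)
      (f : (fpow F a).obj X ⟶ (fpow F b).obj Y),
      lift (a + 1) (b + 1) m n h' (F.map f) = lift a b m n h f
  lift_id : ∀ {X : D} (a : ℕ) (n : ℤ) (h : (a : ℤ) + n = (a : ℤ) + n),
      lift a a n n h (𝟙 ((fpow F a).obj X)) = 𝟙 (obj X n)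
  lift_comp : ∀ {X Y Z : D} (a b c : ℕ) (m n p : ℤ)
      (hab : (a : ℤ) + n = (b : ℤ) + m) (hbc : (b : ℤ) + p = (c : ℤ) + n)
      (hac : (a : ℤ) + p = (c : ℤ) + m)
      (f : (fpow F a).obj X ⟶ (fpow F b).obj Y) (g : (fpow F b).obj Y ⟶ (fpow F c).obj Z),
      lift a b m n hab f ≫ lift b c n p hbc g = lift a c m p hac (f ≫ g)
  lift_add : ∀ {X Y : D} (a b : ℕ) (m n : ℤ) (h : (a : ℤ) + n = (b : ℤ) + m)
      (f g : (fpow F a).obj X ⟶ (fpow F b).obj Y),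
      lift a b m n h (f + g) = lift a b m n h f + lift a b m n h g
  lift_surj : ∀ {X Y : D} {m n : ℤ} (φ : obj X m ⟶ obj Y n),
      ∃ (a b : ℕ) (h : (a : ℤ) + n = (b : ℤ) + m) (f : (fpow F a).obj X ⟶ (fpow F b).obj Y),
        φ = lift a b m n h f
  lift_inj : ∀ {X Y : D} (a b a' b' : ℕ) (m n : ℤ)
      (h : (a : ℤ) + n = (b : ℤ) + m) (h' : (a' : ℤ) + n = (b' : ℤ) + m)
      (f : (fpow F a).obj X ⟶ (fpow F b).obj Y)
      (f' : (fpow F a').obj X ⟶ (fpow F b').obj Y),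
      lift a b m n h f = lift a' b' m n h' f' →
      ∃ (j j' : ℕ), a + j = a' + j' ∧ b + j = b' + j' ∧
        HEq (raiseN F j f) (raiseN F j' f')
  dense : ∀ s : S, ∃ (X : D) (n : ℤ), Nonempty (s ≅ obj X n)

/-- The subcategory `dℤ𝒳` of the stabilization: all objects isomorphic to some
`(X, dk)` with `X ∈ 𝒳`, `k ∈ ℤ`. -/
def dZSet {D : Type u'} [Category.{v'} D] [Preadditive D] {F : D ⥤ D}
    {S : Type w} [Category.{w'} S] [Preadditive S] (st : IsStabilization F S)
    (X : Set D) (d : ℕ) : Set S :=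
  {s | ∃ (A : D) (k : ℤ), A ∈ X ∧ Nonempty (s ≅ st.obj A ((d : ℤ) * k))}

/-- The standard triangles of the stabilization of a left triangulated category:
those induced by a sequence in `D` whose sign-twist by `(-1)^k` is a triangle. -/
def stdTriangles {D : Type u'} [Category.{v'} D] [Preadditive D] [HasZeroObject D]
    {Om : D ⥤ D} (L : LeftTriangStruct D Om)
    {S : Type w} [Category.{w'} S] [Preadditive S] (st : IsStabilization Om S)
    (Se : S ≌ S) (σ : ∀ (A : D) (n : ℤ), Se.functor.obj (st.obj A n) ≅ st.obj A (n - 1)) :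
    Set (Tri S Se.functor) :=
  {T | ∃ (C₁ C₂ C₃ : D) (n₁ n₂ n₃ k : ℤ) (a₁ a₂ a₃ : ℕ),
    (a₁ : ℤ) = n₁ + k ∧ (a₂ : ℤ) = n₂ + k ∧ (a₃ : ℤ) = n₃ + k ∧
    ∃ (u : (fpow Om (a₁ + 1)).obj C₁ ⟶ (fpow Om a₃).obj C₃)
      (v : (fpow Om a₃).obj C₃ ⟶ (fpow Om a₂).obj C₂)
      (w : (fpow Om a₂).obj C₂ ⟶ (fpow Om a₁).obj C₁)
      (h₁ : (a₃ : ℤ) + n₂ = (a₂ : ℤ) + n₃) (h₂ : (a₂ : ℤ) + n₁ = (a₁ : ℤ) + n₂)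
      (h₃ : ((a₁ + 1 : ℕ) : ℤ) + (n₃ - 1) = (a₃ : ℤ) + n₁),
      LTTriangle.mk ((fpow Om a₃).obj C₃) ((fpow Om a₂).obj C₂) ((fpow Om a₁).obj C₁)
        (((k.negOnePow : ℤˣ) : ℤ) • u) (((k.negOnePow : ℤˣ) : ℤ) • v)
        (((k.negOnePow : ℤˣ) : ℤ) • w) ∈ L.dist ∧
      T = Tri.mk (st.obj C₃ n₃) (st.obj C₂ n₂) (st.obj C₁ n₁)
            (st.lift a₃ a₂ n₃ n₂ h₁ v) (st.lift a₂ a₁ n₂ n₁ h₂ w)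
            (st.lift (a₁ + 1) a₃ n₁ (n₃ - 1) h₃ u ≫ (σ C₃ n₃).inv)}

/-- The syzygy functor `Ω` on the stable category, together with its defining data:
for each object a chosen conflation `0 → K X → P X → X → 0` with `P X` projective,
identifications `Ω(X̲) ≅ K X`, and the characterization of `Ω` on morphisms by
lifting along these conflations. -/
structure SyzygyFunctor (E : ExactStructure C) where
  Om : St E ⥤ St E
  P : C → C
  projP : ∀ X : C, E.Proj (P X)
  K : C → C
  i : ∀ X : C, K X ⟶ P X
  p : ∀ X : C, P X ⟶ X
  sesX : ∀ X : C, E.ses (i X) (p X)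
  iso : ∀ X : C, Om.obj ((stq E).obj X) ≅ (stq E).obj (K X)
  map_spec : ∀ {X Y : C} (f : X ⟶ Y) (g : P X ⟶ P Y) (k : K X ⟶ K Y),
      g ≫ p Y = p X ≫ f → i X ≫ g = k ≫ i Y →
      Om.map ((stq E).map f) = (iso X).hom ≫ (stq E).map k ≫ (iso Y).inv

/-- The standard triangles of the stable category of an exact category with enough
projectives (Theorem 3.2): `Ω E₁ → E₃ → E₂ → E₁` induced by a conflation
`0 → E₃ → E₂ → E₁ → 0` and a lift of diagrams against `0 → K E₁ → P E₁ → E₁ → 0`. -/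
def stdStableTriangles (E : ExactStructure C) (SF : SyzygyFunctor E) :
    Set (LTTriangle (St E) SF.Om) :=
  {T | ∃ (E₁ E₂ E₃ : C) (v : E₃ ⟶ E₂) (w : E₂ ⟶ E₁) (_ : E.ses v w)
      (u : SF.K E₁ ⟶ E₃) (g : SF.P E₁ ⟶ E₂),
      SF.i E₁ ≫ g = u ≫ v ∧ g ≫ w = SF.p E₁ ∧
      (LTTriangle.mk ((stq E).obj E₃) ((stq E).obj E₂) ((stq E).obj E₁)
        ((SF.iso E₁).hom ≫ (stq E).map u) ((stq E).map v) ((stq E).map w)).IsoSeq T}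

/-- Gorenstein projective objects: cycles of totally acyclic complexes of projectives.
The totally acyclic complex is encoded by its sequence of conflations
`0 → G_i → P_i → G_{i-1} → 0` with `P_i` projective, together with the condition that
each map `G_i → Q` to a projective extends to `P_i` (i.e. `Hom(P_•, Q)` is acyclic). -/
def GorensteinProj (E : ExactStructure C) (G : C) : Prop :=
  ∃ (Gs Ps : ℤ → C) (g : ∀ i : ℤ, Gs i ⟶ Ps i) (p : ∀ i : ℤ, Ps i ⟶ Gs (i - 1)),
    Gs 0 = G ∧ ∀ i : ℤ, E.Proj (Ps i) ∧ E.ses (g i) (p i) ∧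
      (∀ Q : C, E.Proj Q → ∀ f : Gs i ⟶ Q, ∃ h : Ps i ⟶ Q, g i ≫ h = f)

/-- `Syz E n X W` : `W` is an `n`-th syzygy of `X`, i.e. there is a chain of
conflations `0 → K_{j+1} → P_j → K_j → 0` with each `P_j` projective, `K_0 = X`,
`K_n = W`. -/
inductive Syz (E : ExactStructure C) : ℕ → C → C → Prop
  | zero (X : C) : Syz E 0 X X
  | succ {n : ℕ} {X K W P : C} (h : Syz E n X K) (hP : E.Proj P) (w : W ⟶ P) (p : P ⟶ K)
      (hs : E.ses w p) : Syz E (n + 1) X W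

/-- `X` has finite Gorenstein projective dimension: some syzygy `Ω^n(X̲)` is
(stably isomorphic to) a Gorenstein projective object. -/
def FiniteGPdim (E : ExactStructure C) (X : C) : Prop :=
  ∃ (n : ℕ) (W G : C), Syz E n X W ∧ GorensteinProj E G ∧
    Nonempty ((stq E).obj W ≅ (stq E).obj G)

end Paper

/-! If `(B, n)` is a retract of `(A, dk)` in `ℤ𝒞`, the two maps are represented in `𝒞`; since
the hom groups of `ℤ𝒞` are colimits along `Ω`, the composite becomes an identity after applying a
power of `Ω`: some `Ωᵃ B` is a retract of `Ωᵇ A` with `a + dk = b + n`. Applying `Ω` further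
makes `b` a multiple of `d`, so `Ωᵇ A ∈ 𝒳` as `Ωᵈ 𝒳 ⊆ 𝒳`, hence `Ωᵃ B ∈ 𝒳`, and
`(B, n) ≅ (Ωᵃ B, n - a)` with `n - a ∈ dℤ`. -/

namespace Paper

section

variable {D : Type u} [Category.{v} D]

theorem eq_id_of_heq_id {X Y : D} (hXY : X = Y) {f : X ⟶ X} (h : HEq f (𝟙 Y)) : f = 𝟙 X := by
  subst hXY
  exact eq_of_heq h

theorem fpow_add_obj (F : D ⥤ D) (a : ℕ) :
    ∀ (c : ℕ) (X : D), (fpow F (a + c)).obj X = (fpow F c).obj ((fpow F a).obj X)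
  | 0, _ => rfl
  | c + 1, X => congrArg F.obj (fpow_add_obj F a c X)

theorem fpow_mul_mem {F : D ⥤ D} {X : Set D} {d : ℕ}
    (hX : ∀ A ∈ X, (fpow F d).obj A ∈ X) {A : D} (hA : A ∈ X) :
    ∀ m : ℕ, (fpow F (d * m)).obj A ∈ X
  | 0 => hA
  | m + 1 => by
    rw [Nat.mul_succ, fpow_add_obj]
    exact hX _ (fpow_mul_mem hX hA m)

theorem raiseN_comp (F : D ⥤ D) (j : ℕ) {X Y Z : D} {a b c : ℕ}
    (f : (fpow F a).obj X ⟶ (fpow F b).obj Y) (g : (fpow F b).obj Y ⟶ (fpow F c).obj Z) :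
    raiseN F j (f ≫ g) = raiseN F j f ≫ raiseN F j g := by
  induction j with
  | zero => rfl
  | succ j ih => exact (congrArg F.map ih).trans (F.map_comp _ _)

theorem raiseN_id (F : D ⥤ D) (j : ℕ) {X : D} (a : ℕ) :
    raiseN F j (𝟙 ((fpow F a).obj X)) = 𝟙 ((fpow F (a + j)).obj X) := by
  induction j with
  | zero => rfl
  | succ j ih => exact (congrArg F.map ih).trans (F.map_id _)

end

namespace IsStabilization

variable {D : Type u} [Category.{v} D] [Preadditive D] {F : D ⥤ D}
  {S : Type w} [Category.{w'} S] [Preadditive S] (st : IsStabilization F S)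

theorem lift_raiseN {X Y : D} (a b : ℕ) (m n : ℤ) (h : (a : ℤ) + n = (b : ℤ) + m)
    (f : (fpow F a).obj X ⟶ (fpow F b).obj Y) (j : ℕ)
    (h' : ((a + j : ℕ) : ℤ) + n = ((b + j : ℕ) : ℤ) + m) :
    st.lift (a + j) (b + j) m n h' (raiseN F j f) = st.lift a b m n h f := by
  induction j with
  | zero => rfl
  | succ j ih =>
    exact (st.lift_raise (a + j) (b + j) m n (by push_cast at h ⊢; omega) h' _).trans (ih _)

theorem exists_lift_of_le {X Y : D} {m n : ℤ} (φ : st.obj X m ⟶ st.obj Y n) :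
    ∃ N : ℕ, ∀ (a b : ℕ) (h : (a : ℤ) + n = (b : ℤ) + m), N ≤ a →
      ∃ f : (fpow F a).obj X ⟶ (fpow F b).obj Y, φ = st.lift a b m n h f := by
  obtain ⟨a₀, b₀, h₀, f₀, rfl⟩ := st.lift_surj φ
  refine ⟨a₀, fun a b h ha => ?_⟩
  obtain ⟨j, rfl⟩ := Nat.exists_eq_add_of_le ha
  obtain rfl : b = b₀ + j := by omega
  exact ⟨raiseN F j f₀, (st.lift_raiseN a₀ b₀ m n h₀ f₀ j h).symm⟩

theorem exists_raiseN_eq_id {X : D} (a : ℕ) (n : ℤ)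
    (f : (fpow F a).obj X ⟶ (fpow F a).obj X) (hf : st.lift a a n n rfl f = 𝟙 (st.obj X n)) :
    ∃ j : ℕ, raiseN F j f = 𝟙 _ := by
  obtain ⟨j, j', hj, -, hheq⟩ :=
    st.lift_inj a a 0 0 n n rfl rfl f (𝟙 ((fpow F 0).obj X)) (hf.trans (st.lift_id 0 n rfl).symm)
  rw [raiseN_id] at hheq
  exact ⟨j, eq_id_of_heq_id (by rw [hj]) hheq⟩

theorem exists_retract_fpow {A B : D} {m n : ℤ} (R : Retract (st.obj B n) (st.obj A m)) :
    ∃ a b : ℕ, (a : ℤ) + m = (b : ℤ) + n ∧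
      Nonempty (Retract ((fpow F a).obj B) ((fpow F b).obj A)) := by
  obtain ⟨N₁, hN₁⟩ := st.exists_lift_of_le R.i
  obtain ⟨N₂, hN₂⟩ := st.exists_lift_of_le R.r
  obtain ⟨a, b, hab, ha, hb⟩ : ∃ a b : ℕ, (a : ℤ) + m = (b : ℤ) + n ∧ N₁ ≤ a ∧ N₂ ≤ b :=
    ⟨N₁ + N₂ + (n - m).toNat, N₁ + N₂ + (m - n).toNat, by omega, by omega, by omega⟩
  obtain ⟨f, hf⟩ := hN₁ a b hab ha
  obtain ⟨g, hg⟩ := hN₂ b a hab.symm hb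
  have hfg : st.lift a a n n rfl (f ≫ g) = 𝟙 _ := by
    rw [← st.lift_comp a b a n m n hab hab.symm rfl, ← hf, ← hg, R.retract]
  obtain ⟨j, hj⟩ := st.exists_raiseN_eq_id a n (f ≫ g) hfg
  refine ⟨a + j, b + j, by push_cast; omega, ⟨raiseN F j f, raiseN F j g, ?_⟩⟩
  rw [← raiseN_comp, hj]

noncomputable def shiftIso (B : D) (c : ℕ) (n : ℤ) :
    st.obj B n ≅ st.obj ((fpow F c).obj B) (n - c) where
  hom := st.lift c 0 n (n - c) (by push_cast; ring) (𝟙 ((fpow F c).obj B))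
  inv := st.lift 0 c (n - c) n (by push_cast; ring) (𝟙 ((fpow F c).obj B))
  hom_inv_id :=
    (st.lift_comp c 0 c n (n - c) n _ _ rfl _ _).trans
      ((congrArg _ (Category.id_comp _)).trans (st.lift_id c n rfl))
  inv_hom_id :=
    (st.lift_comp 0 c 0 (n - c) n (n - c) _ _ rfl _ _).trans
      ((congrArg _ (Category.id_comp _)).trans (st.lift_id 0 (n - c) rfl))

end IsStabilization

/-- Lemma 5.4. If `𝒳` is a `dℤ`-cluster tilting subcategory of a
left triangulated category `𝒞`, then the subcategory `dℤ𝒳` of the stabilization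
`ℤ𝒞` (objects isomorphic to some `(X, dk)`, `X ∈ 𝒳`) is closed under direct
summands. -/
theorem statement7 {D : Type u} [Category.{v} D] [Preadditive D] [HasZeroObject D]
    {Om : D ⥤ D} (L : LeftTriangStruct D Om) (X : Set D) (d : ℕ) (hd : 0 < d)
    (hX : ClusterTiltingLTDZ L X d)
    {S : Type w} [Category.{w'} S] [Preadditive S] (st : IsStabilization Om S) :
    ∀ s ∈ dZSet st X d, ∀ (t : S) (r : t ⟶ s) (q : s ⟶ t), r ≫ q = 𝟙 t →
      t ∈ dZSet st X d := by
  rintro s ⟨A, k, hA, ⟨es⟩⟩ t r q hrq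
  obtain ⟨B, n, ⟨et⟩⟩ := st.dense t
  obtain ⟨a, b, hab, ⟨R⟩⟩ := st.exists_retract_fpow
    (et.symm.retract.trans ((Retract.mk r q hrq).trans es.retract))
  -- Applying `Om^e` with `e = (d - 1) b` moves `Om^b A` to `Om^(d b) A ∈ X`.
  set e := (d - 1) * b
  have hdb : b + e = d * b := by
    rw [Nat.add_comm, ← Nat.succ_mul, Nat.succ_eq_add_one, Nat.sub_add_cancel hd]
  have hmem : (fpow Om e).obj ((fpow Om b).obj A) ∈ X := by
    rw [← fpow_add_obj, hdb]
    exact fpow_mul_mem hX.2 hA b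
  have hlevel : n - a - e = d * (k - b) := by
    have : ((b + e : ℕ) : ℤ) = d * b := by exact_mod_cast hdb
    push_cast at this
    linear_combination -hab - this
  refine ⟨_, k - b, hX.1.summand_closed hmem _ _ (R.map (fpow Om e)).retract, ?_⟩
  rw [← hlevel]
  exact ⟨et ≪≫ st.shiftIso B a n ≪≫ st.shiftIso _ e (n - a)⟩

end Paper
end

section
/- Let 𝒞 be a triangulated category with suspension Σ, regarded as a left triangulated category with Ω = Σ⁻¹. A full subcategory 𝒳 ⊆ 𝒞 is d-cluster tilting in the sense of left triangulated categories (direct-summand closed, existence of (d+2)-angles, Ω-fullness/faithfulness, and Hom(Ω^iX', X) = 0 for 1 ≤ i ≤ d−1) if and only if 𝒳 is d-cluster tilting in the usual triangulated sense (functorially finite and 𝒳 = {C : Hom(𝒳, Σ^iC) = 0, 1 ≤ i ≤ d−1} = {C : Hom(C, Σ^i𝒳) = 0, 1 ≤ i ≤ d−1}). -/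
open CategoryTheory CategoryTheory.Limits ZeroObject

universe w w' v u

/-!
Since `Ω = Σ⁻¹` is an equivalence, `Hom(Ωⁱ A, B) = 0` iff `Hom(A, Σⁱ B) = 0`, and a left
triangle `Ω C → A → M → C` is distinguished exactly when `A → M → C → Σ A` is, so a
`(d+2)`-angle is a tower of triangles `Kⱼ → Xⱼ → Kⱼ₋₁ → Σ Kⱼ` with middle terms in `𝒳`.

Given the resolution `0 → X_d → ⋯ → X₁ → C → 0`, dimension shifting along the tower shows
`Hom(V, Σ K₁) = 0` for every `V` with `Hom(V, Σⁱ 𝒳) = 0` (`1 ≤ i ≤ d - 1`), so every map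
`V → C` factors through `X₁ → C`. For `V ∈ 𝒳` this is contravariant finiteness; when `C`
itself satisfies the vanishing, `V = C` makes `C` a summand of `X₁`, whence `C ∈ 𝒳`. Coresolutions give the dual statements.

Conversely the angles are built from approximation triangles `B → X⁰ → Q → Σ B`: since every
map `B → 𝒳` factors through `X⁰`, the connecting map kills `Hom(Q, Σ 𝒳)`, while the vanishing
of `Hom(Q, Σⁱ 𝒳)` for larger `i` is shifted down from that of `B`.
-/

namespace Paper

theorem fpow_succ_obj' {D : Type u} [Category.{v} D] (F : D ⥤ D) (n : ℕ) (A : D) :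
    (fpow F (n + 1)).obj A = (fpow F n).obj (F.obj A) := by
  induction n with
  | zero => rfl
  | succ n ih => exact congrArg F.obj ih

section Equivalence

variable {T : Type w} [Category.{w'} T] (Se : T ≌ T)

theorem subsingleton_inverse_obj_hom_iff (A B : T) :
    Subsingleton (Se.inverse.obj A ⟶ B) ↔ Subsingleton (A ⟶ Se.functor.obj B) :=
  (Se.symm.toAdjunction.homEquiv A B).subsingleton_congr

theorem subsingleton_fpow_inverse_obj_hom_iff (i : ℕ) (A B : T) :
    Subsingleton ((fpow Se.inverse i).obj A ⟶ B) ↔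
      Subsingleton (A ⟶ (fpow Se.functor i).obj B) := by
  induction i generalizing B with
  | zero => rfl
  | succ i ih =>
    rw [fpow_succ_obj' Se.functor]
    exact (subsingleton_inverse_obj_hom_iff Se _ B).trans (ih _)

end Equivalence

section Approx

variable {T : Type w} [Category.{w'} T]

theorem RightApprox.mono {S S' : Set T} {M A : T} {f : M ⟶ A} (hf : RightApprox S f)
    (h : S' ⊆ S) : RightApprox S' f :=
  fun V hV g => hf V (h hV) g

theorem LeftApprox.mono {S S' : Set T} {A M : T} {f : A ⟶ M} (hf : LeftApprox S f)
    (h : S' ⊆ S) : LeftApprox S' f :=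
  fun N hN g => hf N (h hN) g

end Approx

section Perp

variable {T : Type w} [Category.{w'} T] [Preadditive T]

theorem subsingleton_hom_iff_forall_eq_zero {A B : T} :
    Subsingleton (A ⟶ B) ↔ ∀ f : A ⟶ B, f = 0 :=
  subsingleton_iff_forall_eq 0

def leftPerp (Sf : T ⥤ T) (X : Set T) (d : ℕ) : Set T :=
  {E | ∀ M ∈ X, ∀ i : ℕ, 1 ≤ i → i + 1 ≤ d → ∀ f : E ⟶ (fpow Sf i).obj M, f = 0}

def rightPerp (Sf : T ⥤ T) (X : Set T) (d : ℕ) : Set T :=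
  {E | ∀ M ∈ X, ∀ i : ℕ, 1 ≤ i → i + 1 ≤ d → ∀ f : M ⟶ (fpow Sf i).obj E, f = 0}

variable {Sf : T ⥤ T} {X : Set T} {d : ℕ} {E : T}

theorem mem_leftPerp_iff : E ∈ leftPerp Sf X d ↔
    ∀ M ∈ X, ∀ i : ℕ, 1 ≤ i → i + 1 ≤ d → Subsingleton (E ⟶ (fpow Sf i).obj M) := by
  simp only [leftPerp, Set.mem_ofPred_eq, subsingleton_hom_iff_forall_eq_zero]

theorem mem_rightPerp_iff : E ∈ rightPerp Sf X d ↔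
    ∀ M ∈ X, ∀ i : ℕ, 1 ≤ i → i + 1 ≤ d → Subsingleton (M ⟶ (fpow Sf i).obj E) := by
  simp only [rightPerp, Set.mem_ofPred_eq, subsingleton_hom_iff_forall_eq_zero]

theorem ClusterTiltingTri.subsingleton_hom (hCT : ClusterTiltingTri T Sf X d) {M₀ M₁ : T}
    (hM₀ : M₀ ∈ X) (hM₁ : M₁ ∈ X) {i : ℕ} (h1 : 1 ≤ i) (h2 : i + 1 ≤ d) :
    Subsingleton (M₀ ⟶ (fpow Sf i).obj M₁) :=
  mem_leftPerp_iff.1 (hCT.eq_left.subset hM₀ : M₀ ∈ leftPerp Sf X d) M₁ hM₁ i h1 h2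

end Perp

namespace TriangStructOn

variable {T : Type w} [Category.{w'} T] [Preadditive T] [HasZeroObject T]
  {Se : T ≌ T} {dist : Set (Tri T Se.functor)}

theorem comp_eq_zero (hT : TriangStructOn T Se dist) {T₁ : Tri T Se.functor} (h : T₁ ∈ dist) :
    T₁.m₁ ≫ T₁.m₂ = 0 := by
  obtain ⟨c, hc, -⟩ := hT.complete_mor _ T₁ (hT.id_tri T₁.obj₁) h (𝟙 _) T₁.m₁ (by simp)
  simpa using hc.symm

theorem zero_tri_mem (hT : TriangStructOn T Se dist) (N : T) :
    Tri.mk 0 N N 0 (𝟙 N) 0 ∈ dist :=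
  hT.unrotate _ _ _ <| hT.iso_closed _ _ (hT.id_tri N)
    ⟨Iso.refl N, Iso.refl N, (isZero_zero T).iso (Se.functor.map_isZero (isZero_zero T)),
      by simp, by simp, by simp⟩

theorem coyoneda_exact₂ (hT : TriangStructOn T Se dist) {T₁ : Tri T Se.functor} (h : T₁ ∈ dist)
    {W : T} (t : W ⟶ T₁.obj₂) (ht : t ≫ T₁.m₂ = 0) : ∃ s : W ⟶ T₁.obj₁, s ≫ T₁.m₁ = t := by
  obtain ⟨c, -, hc⟩ := hT.complete_mor _ _ (hT.rotate _ (hT.id_tri W)) (hT.rotate T₁ h) t 0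
    (by simp [ht])
  refine ⟨Se.functor.preimage c, Se.functor.map_injective ?_⟩
  simpa using hc.symm

theorem coyoneda_exact₃ (hT : TriangStructOn T Se dist) {T₁ : Tri T Se.functor} (h : T₁ ∈ dist)
    {W : T} (t : W ⟶ T₁.obj₃) (ht : t ≫ T₁.m₃ = 0) : ∃ s : W ⟶ T₁.obj₂, s ≫ T₁.m₂ = t :=
  hT.coyoneda_exact₂ (hT.rotate T₁ h) t ht

theorem yoneda_exact₂ (hT : TriangStructOn T Se dist) {T₁ : Tri T Se.functor} (h : T₁ ∈ dist)
    {N : T} (φ : T₁.obj₂ ⟶ N) (hφ : T₁.m₁ ≫ φ = 0) : ∃ ψ : T₁.obj₃ ⟶ N, T₁.m₂ ≫ ψ = φ := by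
  obtain ⟨ψ, hψ, -⟩ := hT.complete_mor T₁ _ h (hT.zero_tri_mem N) 0 φ (by simp [hφ])
  exact ⟨ψ, by simpa using hψ⟩

theorem exists_invRotate (hT : TriangStructOn T Se dist) {A B C : T} {u : A ⟶ B} {v : B ⟶ C}
    {w : C ⟶ Se.functor.obj A} (h : Tri.mk A B C u v w ∈ dist) :
    ∃ m : Se.inverse.obj C ⟶ A,
      Tri.mk (Se.inverse.obj C) A B m u (v ≫ (Se.counitIso.app C).inv) ∈ dist :=
  ⟨Se.functor.preimage (-((Se.counitIso.app C).hom ≫ w)), hT.unrotate _ _ _ <|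
    hT.iso_closed _ _ h ⟨Iso.refl A, Iso.refl B, (Se.counitIso.app C).symm, by simp, by simp,
      by simp⟩⟩

end TriangStructOn

section Chains

variable {D : Type w} [Category.{w'} D] [Preadditive D] [HasZeroObject D] {Om : D ⥤ D}
  {L : LeftTriangStruct D Om} {X : Set D}

theorem LTChain.cons {A B₁ M : D} (hM : M ∈ X) (u : Om.obj A ⟶ B₁) (v : B₁ ⟶ M) (w : M ⟶ A)
    (ht : LTTriangle.mk B₁ M A u v w ∈ L.dist) :
    ∀ {n : ℕ} {B : D}, LTChain L X n B₁ B → LTChain L X (n + 1) A B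
  | _, _, .zero _ => .succ (.zero A) hM u v w ht
  | _, _, .succ hc hM' u' v' w' ht' => .succ (LTChain.cons hM u v w ht hc) hM' u' v' w' ht'

theorem LTChain.exists_head :
    ∀ {n : ℕ} {A B : D}, LTChain L X (n + 1) A B →
      ∃ (B₁ M : D) (u : Om.obj A ⟶ B₁) (v : B₁ ⟶ M) (w : M ⟶ A),
        M ∈ X ∧ LTTriangle.mk B₁ M A u v w ∈ L.dist ∧ LTChain L X n B₁ B
  | 0, _, _, .succ (.zero _) hM u v w ht => ⟨_, _, u, v, w, hM, ht, .zero _⟩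
  | _ + 1, _, _, .succ hc hM u v w ht => by
    obtain ⟨B₁, M₁, u₁, v₁, w₁, hM₁, ht₁, hc₁⟩ := hc.exists_head
    exact ⟨B₁, M₁, u₁, v₁, w₁, hM₁, ht₁, .succ hc₁ hM u v w ht⟩

end Chains

section Induced

variable {T : Type w} [Category.{w'} T] [Preadditive T] [HasZeroObject T]

structure IsInducedLT (Se : T ≌ T) (dist : Set (Tri T Se.functor))
    (L : LeftTriangStruct T Se.inverse) : Prop where
  triang : TriangStructOn T Se dist
  mem_iff : ∀ {A B C : T} (u : Se.inverse.obj C ⟶ A) (v : A ⟶ B) (w : B ⟶ C),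
    LTTriangle.mk A B C u v w ∈ L.dist ↔
      Tri.mk A B C v w ((Se.counitIso.app C).inv ≫ Se.functor.map u) ∈ dist

variable {Se : T ≌ T} {dist : Set (Tri T Se.functor)} {L : LeftTriangStruct T Se.inverse}
  {X : Set T} {d : ℕ}

namespace IsInducedLT

theorem tri_mem (hL : IsInducedLT Se dist L) {A M C : T} {u : Se.inverse.obj C ⟶ A}
    {v : A ⟶ M} {w : M ⟶ C} (ht : LTTriangle.mk A M C u v w ∈ L.dist) :
    Tri.mk A M C v w ((Se.counitIso.app C).inv ≫ Se.functor.map u) ∈ dist :=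
  (hL.mem_iff u v w).1 ht

theorem exists_mem_of_tri_mem (hL : IsInducedLT Se dist L) {A M C : T} {v : A ⟶ M} {w : M ⟶ C}
    {h : C ⟶ Se.functor.obj A} (ht : Tri.mk A M C v w h ∈ dist) :
    ∃ u : Se.inverse.obj C ⟶ A, LTTriangle.mk A M C u v w ∈ L.dist :=
  ⟨Se.functor.preimage ((Se.counitIso.app C).hom ≫ h), (hL.mem_iff _ v w).2 (by simpa using ht)⟩

section Triangle

variable {A M C : T} {u : Se.inverse.obj C ⟶ A} {v : A ⟶ M} {w : M ⟶ C}

theorem exists_lift_m₂ (hL : IsInducedLT Se dist L)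
    (ht : LTTriangle.mk A M C u v w ∈ L.dist) {V : T}
    (hV : Subsingleton (V ⟶ Se.functor.obj A)) (g : V ⟶ C) : ∃ h : V ⟶ M, h ≫ w = g :=
  hL.triang.coyoneda_exact₃ (hL.tri_mem ht) g (hV.allEq _ _)

theorem exists_desc_m₁ (hL : IsInducedLT Se dist L)
    (ht : LTTriangle.mk A M C u v w ∈ L.dist) {N : T}
    (hN : Subsingleton (C ⟶ Se.functor.obj N)) (g : A ⟶ N) : ∃ h : M ⟶ N, v ≫ h = g := by
  obtain ⟨m, hm⟩ := hL.triang.exists_invRotate (hL.tri_mem ht)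
  exact hL.triang.yoneda_exact₂ hm g (((subsingleton_inverse_obj_hom_iff Se C N).2 hN).allEq _ _)

theorem subsingleton_hom_fpow_obj₃ (hL : IsInducedLT Se dist L)
    (ht : LTTriangle.mk A M C u v w ∈ L.dist) {V : T} (j : ℕ)
    (hM : Subsingleton (V ⟶ (fpow Se.functor j).obj M))
    (hA : Subsingleton (V ⟶ (fpow Se.functor (j + 1)).obj A)) :
    Subsingleton (V ⟶ (fpow Se.functor j).obj C) := by
  rw [← subsingleton_fpow_inverse_obj_hom_iff] at hM ⊢
  rw [fpow_succ_obj', ← subsingleton_fpow_inverse_obj_hom_iff] at hA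
  refine subsingleton_of_forall_eq 0 fun g => ?_
  obtain ⟨h, rfl⟩ := hL.exists_lift_m₂ ht hA g
  rw [hM.allEq h 0, zero_comp]

theorem subsingleton_obj₁_hom_fpow (hL : IsInducedLT Se dist L)
    (ht : LTTriangle.mk A M C u v w ∈ L.dist) {N : T} (j : ℕ)
    (hM : Subsingleton (M ⟶ (fpow Se.functor j).obj N))
    (hC : Subsingleton (C ⟶ (fpow Se.functor (j + 1)).obj N)) :
    Subsingleton (A ⟶ (fpow Se.functor j).obj N) := by
  refine subsingleton_of_forall_eq 0 fun g => ?_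
  obtain ⟨h, rfl⟩ := hL.exists_desc_m₁ ht hC g
  rw [hM.allEq h 0, comp_zero]

theorem subsingleton_obj₃_hom_shift (hL : IsInducedLT Se dist L)
    (ht : LTTriangle.mk A M C u v w ∈ L.dist) {N : T}
    (hfac : ∀ b : A ⟶ N, ∃ h : M ⟶ N, v ≫ h = b) (hM : Subsingleton (M ⟶ Se.functor.obj N)) :
    Subsingleton (C ⟶ Se.functor.obj N) := by
  have hrot := hL.triang.rotate _ (hL.tri_mem ht)
  have hv : ((Se.counitIso.app C).inv ≫ Se.functor.map u) ≫ Se.functor.map v = 0 := by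
    simpa only [Preadditive.comp_neg, neg_eq_zero] using
      hL.triang.comp_eq_zero (hL.triang.rotate _ hrot)
  refine subsingleton_of_forall_eq 0 fun φ => ?_
  obtain ⟨ψ, rfl⟩ := hL.triang.yoneda_exact₂ hrot φ (hM.allEq _ _)
  obtain ⟨σ, hσ⟩ := hfac (Se.functor.preimage ψ)
  dsimp only
  rw [← Se.functor.map_preimage ψ, ← hσ, Se.functor.map_comp, ← Category.assoc, hv, zero_comp]

theorem subsingleton_hom_shift_obj₁ (hL : IsInducedLT Se dist L)
    (ht : LTTriangle.mk A M C u v w ∈ L.dist) {V : T}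
    (hfac : ∀ b : V ⟶ C, ∃ h : V ⟶ M, h ≫ w = b) (hM : Subsingleton (V ⟶ Se.functor.obj M)) :
    Subsingleton (V ⟶ Se.functor.obj A) := by
  have hrot := hL.triang.rotate _ (hL.tri_mem ht)
  refine subsingleton_of_forall_eq 0 fun φ => ?_
  obtain ⟨s, rfl⟩ := hL.triang.coyoneda_exact₃ hrot φ (hM.allEq _ _)
  obtain ⟨σ, rfl⟩ := hfac s
  rw [Category.assoc, hL.triang.comp_eq_zero hrot, comp_zero]

end Triangle

theorem subsingleton_hom_fpow_start_of_chain (hL : IsInducedLT Se dist L) {V : T}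
    (hV : V ∈ leftPerp Se.functor X d) {k : ℕ} (hk : 1 ≤ k) :
    ∀ {n : ℕ} {A B : T}, LTChain L X n A B → k + n + 1 ≤ d →
      Subsingleton (V ⟶ (fpow Se.functor (k + n)).obj B) →
      Subsingleton (V ⟶ (fpow Se.functor k).obj A)
  | _, _, _, .zero _, _, hB => hB
  | n + 1, _, _, .succ hc hM _ _ _ ht, hn, hB =>
    subsingleton_hom_fpow_start_of_chain hL hV hk hc (by omega) <|
      hL.subsingleton_hom_fpow_obj₃ ht (k + n)
        (mem_leftPerp_iff.1 hV _ hM _ (by omega) (by omega)) hB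

theorem subsingleton_end_hom_fpow_of_chain (hL : IsInducedLT Se dist L) {N : T}
    (hN : N ∈ rightPerp Se.functor X d) :
    ∀ {n : ℕ} {A B : T}, LTChain L X n A B → IsZero A → ∀ j : ℕ, 1 ≤ j → j + n ≤ d →
      Subsingleton (B ⟶ (fpow Se.functor j).obj N)
  | _, _, _, .zero _, hA, _, _, _ => ⟨hA.eq_of_src⟩
  | n + 1, _, _, .succ hc hM _ _ _ ht, hA, j, hj, hn =>
    hL.subsingleton_obj₁_hom_fpow ht j (mem_rightPerp_iff.1 hN _ hM _ hj (by omega))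
      (subsingleton_end_hom_fpow_of_chain hL hN hc hA (j + 1) (by omega) (by omega))

theorem exists_leftApprox_of_chain (hL : IsInducedLT Se dist L) {n : ℕ} {A C : T}
    (hc : LTChain L X (n + 1) A C) (hA : IsZero A) (hn : n + 1 ≤ d) :
    ∃ (M : T) (f : C ⟶ M), M ∈ X ∧ LeftApprox (rightPerp Se.functor X d) f := by
  obtain _ | ⟨hc, hM, u, v, w, ht⟩ := hc
  exact ⟨_, v, hM, fun N hN => hL.exists_desc_m₁ ht
    (hL.subsingleton_end_hom_fpow_of_chain hN hc hA 1 le_rfl (by omega))⟩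

theorem exists_rightApprox_of_chain (hL : IsInducedLT Se dist L) :
    ∀ {n : ℕ} {A B : T}, LTChain L X n A B → B ∈ X → n + 1 ≤ d →
      ∃ (M : T) (f : M ⟶ A), M ∈ X ∧ RightApprox (leftPerp Se.functor X d) f
  | 0, _, B, .zero _, hB, _ => ⟨B, 𝟙 B, hB, fun _ _ g => ⟨g, Category.comp_id g⟩⟩
  | c + 1, _, B, hc, hB, hn => by
    obtain ⟨B₁, M, u, v, w, hM, ht, hc⟩ := hc.exists_head
    refine ⟨M, w, hM, fun V hV => hL.exists_lift_m₂ ht ?_⟩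
    exact hL.subsingleton_hom_fpow_start_of_chain hV le_rfl hc (by omega)
      (mem_leftPerp_iff.1 hV B hB (1 + c) (by omega) (by omega))

end IsInducedLT

namespace ClusterTiltingLT

theorem subset_leftPerp (hCT : ClusterTiltingLT L X d) : X ⊆ leftPerp Se.functor X d :=
  fun _ hE => mem_leftPerp_iff.2 fun M hM i h1 h2 =>
    (subsingleton_fpow_inverse_obj_hom_iff Se i _ M).1
      (subsingleton_hom_iff_forall_eq_zero.2 (hCT.hom_vanish M _ hM hE i h1 h2))

theorem subset_rightPerp (hCT : ClusterTiltingLT L X d) : X ⊆ rightPerp Se.functor X d :=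
  fun _ hE => mem_rightPerp_iff.2 fun M hM i h1 h2 =>
    (subsingleton_fpow_inverse_obj_hom_iff Se i M _).1
      (subsingleton_hom_iff_forall_eq_zero.2 (hCT.hom_vanish _ M hE hM i h1 h2))

theorem exists_rightApprox_leftPerp (hL : IsInducedLT Se dist L) (hCT : ClusterTiltingLT L X d)
    (hd : 0 < d) (C : T) :
    ∃ (M : T) (f : M ⟶ C), M ∈ X ∧ RightApprox (leftPerp Se.functor X d) f := by
  obtain ⟨Z₀, Z₁, W, u₀, v₀, w₀, hZ₀, ht, hc, hW⟩ := hCT.res C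
  obtain ⟨M, f, hM, hf⟩ := hL.exists_rightApprox_of_chain (d := d) hc hW (by omega)
  refine ⟨M, f ≫ v₀, hM, fun V hV g => ?_⟩
  obtain ⟨g₁, rfl⟩ := hL.triang.coyoneda_exact₂ (hL.tri_mem ht) g (hZ₀.eq_of_tgt _ _)
  obtain ⟨h, rfl⟩ := hf V hV g₁
  exact ⟨h, (Category.assoc _ _ _).symm⟩

theorem exists_leftApprox_rightPerp (hL : IsInducedLT Se dist L) (hCT : ClusterTiltingLT L X d)
    (hd : 0 < d) (C : T) :
    ∃ (M : T) (f : C ⟶ M), M ∈ X ∧ LeftApprox (rightPerp Se.functor X d) f := by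
  obtain ⟨Z₀, hZ₀, hc⟩ := hCT.cores C
  obtain ⟨m, rfl⟩ : ∃ m, d = m + 1 := ⟨d - 1, by omega⟩
  exact hL.exists_leftApprox_of_chain hc hZ₀ le_rfl

theorem toClusterTiltingTri (hL : IsInducedLT Se dist L) (hCT : ClusterTiltingLT L X d)
    (hd : 0 < d) : ClusterTiltingTri T Se.functor X d where
  contra C := by
    obtain ⟨M, f, hM, hf⟩ := hCT.exists_rightApprox_leftPerp hL hd C
    exact ⟨M, f, hM, hf.mono hCT.subset_leftPerp⟩
  cova C := by
    obtain ⟨M, f, hM, hf⟩ := hCT.exists_leftApprox_rightPerp hL hd C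
    exact ⟨M, f, hM, hf.mono hCT.subset_rightPerp⟩
  eq_left := by
    refine hCT.subset_leftPerp.antisymm fun E hE => ?_
    obtain ⟨M, f, hM, hf⟩ := hCT.exists_rightApprox_leftPerp hL hd E
    obtain ⟨s, hs⟩ := hf E hE (𝟙 E)
    exact hCT.summand_closed hM s f hs
  eq_right := by
    refine hCT.subset_rightPerp.antisymm fun E hE => ?_
    obtain ⟨M, f, hM, hf⟩ := hCT.exists_leftApprox_rightPerp hL hd E
    obtain ⟨r, hr⟩ := hf E hE (𝟙 E)
    exact hCT.summand_closed hM f r hr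

end ClusterTiltingLT

namespace ClusterTiltingTri

theorem exists_chain_from_zero (hL : IsInducedLT Se dist L)
    (hCT : ClusterTiltingTri T Se.functor X d) :
    ∀ m : ℕ, m + 1 ≤ d → ∀ B : T,
      (∀ M ∈ X, ∀ i : ℕ, 1 ≤ i → i + m + 1 ≤ d → Subsingleton (B ⟶ (fpow Se.functor i).obj M)) →
      ∃ Z₀ : T, IsZero Z₀ ∧ LTChain L X (m + 1) Z₀ B
  | 0, _, B, hB => by
    have hBX : B ∈ X := hCT.eq_left.symm.subset (show B ∈ leftPerp Se.functor X d from
      mem_leftPerp_iff.2 fun M hM i h1 h2 => hB M hM i h1 (by omega))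
    exact ⟨0, isZero_zero T, .succ (.zero 0) hBX 0 (𝟙 B) 0 (L.contractible B)⟩
  | m + 1, hm, B, hB => by
    obtain ⟨M₀, f, hM₀, hf⟩ := hCT.cova B
    obtain ⟨Q, g, h, htri⟩ := hL.triang.complete f
    obtain ⟨u, ht⟩ := hL.exists_mem_of_tri_mem htri
    have hQ : ∀ M ∈ X, ∀ i : ℕ, 1 ≤ i → i + m + 1 ≤ d →
        Subsingleton (Q ⟶ (fpow Se.functor i).obj M) := by
      rintro M hM (_ | i) h1 h2
      · omega
      refine hL.subsingleton_obj₃_hom_shift ht (fun b => ?_) (hCT.subsingleton_hom hM₀ hM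
        (i := i + 1) (by omega) (by omega))
      rcases i with _ | i
      · exact hf M hM b
      · exact ⟨0, (hB M hM (i + 1) (by omega) (by omega)).allEq _ _⟩
    obtain ⟨Z₀, hZ₀, hc⟩ := exists_chain_from_zero hL hCT m (by omega) Q hQ
    exact ⟨Z₀, hZ₀, .succ hc hM₀ u f g ht⟩

theorem exists_chain_to_mem (hL : IsInducedLT Se dist L)
    (hCT : ClusterTiltingTri T Se.functor X d) :
    ∀ c : ℕ, ∀ B : T,
      (∀ M ∈ X, ∀ i : ℕ, 1 ≤ i → i + c + 1 ≤ d → Subsingleton (M ⟶ (fpow Se.functor i).obj B)) →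
      ∃ W : T, LTChain L X c B W ∧ W ∈ X
  | 0, B, hB => ⟨B, .zero B, hCT.eq_right.symm.subset (show B ∈ rightPerp Se.functor X d from
      mem_rightPerp_iff.2 fun M hM i h1 h2 => hB M hM i h1 (by omega))⟩
  | c + 1, B, hB => by
    obtain ⟨M₀, f, hM₀, hf⟩ := hCT.contra B
    obtain ⟨Q, q, r, htri⟩ := hL.triang.complete f
    obtain ⟨k, hk⟩ := hL.triang.exists_invRotate htri
    obtain ⟨u, ht⟩ := hL.exists_mem_of_tri_mem hk
    have hK : ∀ M ∈ X, ∀ i : ℕ, 1 ≤ i → i + c + 1 ≤ d →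
        Subsingleton (M ⟶ (fpow Se.functor i).obj (Se.inverse.obj Q)) := by
      rintro M hM (_ | i) h1 h2
      · omega
      rw [fpow_succ_obj', ← subsingleton_fpow_inverse_obj_hom_iff]
      refine hL.subsingleton_hom_shift_obj₁ ht (fun b => ?_) ?_
      · rcases i with _ | i
        · exact hf M hM b
        · exact ⟨0, ((subsingleton_fpow_inverse_obj_hom_iff Se _ M B).2
            (hB M hM (i + 1) (by omega) (by omega))).allEq _ _⟩
      · rw [subsingleton_fpow_inverse_obj_hom_iff, ← fpow_succ_obj']
        exact hCT.subsingleton_hom hM hM₀ (by omega) (by omega)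
    obtain ⟨W, hc, hW⟩ := exists_chain_to_mem hL hCT c _ hK
    exact ⟨W, hc.cons hM₀ u k f ht, hW⟩

theorem toClusterTiltingLT (hL : IsInducedLT Se dist L) (hCT : ClusterTiltingTri T Se.functor X d)
    (hd : 0 < d) : ClusterTiltingLT L X d := by
  obtain ⟨m, rfl⟩ : ∃ m, d = m + 1 := ⟨d - 1, by omega⟩
  refine
    { summand_closed := fun {A Z} hZ s r hsr => ?_
      cores := fun C => hCT.exists_chain_from_zero hL m le_rfl C fun _ _ _ _ _ => by omega
      res := fun C => ?_
      om_bij := fun _ _ _ _ _ => Se.fullyFaithfulInverse.map_bijective _ _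
      hom_vanish := fun X₀ X₁ hX₀ hX₁ i h1 h2 f =>
        ((subsingleton_fpow_inverse_obj_hom_iff Se i X₁ X₀).2
          (hCT.subsingleton_hom hX₁ hX₀ h1 h2)).allEq f 0 }
  · rw [hCT.eq_left] at hZ ⊢
    intro M hM i h1 h2 f
    rw [← Category.id_comp f, ← hsr, Category.assoc, hZ M hM i h1 h2 (r ≫ f), comp_zero]
  · obtain ⟨W, hc, hW⟩ := hCT.exists_chain_to_mem hL m C fun _ _ _ _ _ => by omega
    exact ⟨0, C, W, 0, 𝟙 C, 0, isZero_zero T, L.contractible C, hc, hW⟩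

end ClusterTiltingTri

end Induced

theorem statement10_general {T : Type w} [Category.{w'} T] [Preadditive T] [HasZeroObject T]
    (Se : T ≌ T) (dist : Set (Tri T Se.functor))
    (hTS : TriangStructOn T Se dist) (L : LeftTriangStruct T Se.inverse)
    (hL : L.dist = {Tr : LTTriangle T Se.inverse |
      Tri.mk Tr.obj₁ Tr.obj₂ Tr.obj₃ Tr.m₁ Tr.m₂
        ((Se.counitIso.app Tr.obj₃).inv ≫ Se.functor.map Tr.m₀) ∈ dist})
    (X : Set T) (d : ℕ) (hd : 0 < d) :
    ClusterTiltingLT L X d ↔ ClusterTiltingTri T Se.functor X d := by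
  have hInd : IsInducedLT Se dist L := ⟨hTS, fun u v w => by rw [hL]; rfl⟩
  exact ⟨fun h => h.toClusterTiltingTri hInd hd, fun h => h.toClusterTiltingLT hInd hd⟩

/-- Proposition 5.2. For a triangulated category regarded as a left
triangulated category with `Ω = Σ⁻¹`, a full subcategory is `d`-cluster tilting in the
left triangulated sense iff it is `d`-cluster tilting in the usual triangulated
sense. -/
theorem statement10 {T : Type w} [Category.{w'} T] [Preadditive T] [HasZeroObject T]
    [HasBinaryBiproducts T] (Se : T ≌ T) (dist : Set (Tri T Se.functor))
    (hTS : TriangStructOn T Se dist) (L : LeftTriangStruct T Se.inverse)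
    (hL : L.dist = {Tr : LTTriangle T Se.inverse |
      Tri.mk Tr.obj₁ Tr.obj₂ Tr.obj₃ Tr.m₁ Tr.m₂
        ((Se.counitIso.app Tr.obj₃).inv ≫ Se.functor.map Tr.m₀) ∈ dist})
    (X : Set T) (d : ℕ) (hd : 0 < d) :
    ClusterTiltingLT L X d ↔ ClusterTiltingTri T Se.functor X d :=
  statement10_general Se dist hTS L hL X d hd

end Paper
end
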